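/- Let G be a locally compact group with a fixed left Haar measure and π : G → U(H) a continuous unitary representation, extended by π(f)v := ∫_G f(x)π(x)v dx. Then for every smooth δ-family {f_W}_{W∈𝒲} on G, the set {π(f_W)v : W ∈ 𝒲, v ∈ H} is a dense subset of H_∞ with respect to the topology of the space of smooth vectors H_∞. -/

import Mathlib

open Filter Topology MeasureTheory
open scoped Topology

noncomputable section

/-- The set of continuous one-parameter subgroups of a topological group `G`,
topologized as a subspace of `C(ℝ, G)` (compact-open topology, i.e. topology of
uniform convergence on compact subsets of `ℝ`). -/
def OneParam (G : Type*) [TopologicalSpace G] [Group G] : Type _ :=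
  {γ : C(ℝ, G) // ∀ t s : ℝ, γ (t + s) = γ t * γ s}

instance (G : Type*) [TopologicalSpace G] [Group G] : TopologicalSpace (OneParam G) :=
  inferInstanceAs (TopologicalSpace {γ : C(ℝ, G) // ∀ t s : ℝ, γ (t + s) = γ t * γ s})

section DirDeriv

variable {G : Type*} [TopologicalSpace G] [Group G]
variable {Y : Type*} [TopologicalSpace Y] [AddCommGroup Y] [Module ℝ Y]

/-- `φ` has directional derivative `w` at `g` along the one-parameter subgroup `γ`:
`w = lim_{t → 0} (φ(g·γ(t)) - φ(g))/t`. -/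
def HasDirDerivAt (φ : G → Y) (γ : OneParam G) (g : G) (w : Y) : Prop :=
  Tendsto (fun t : ℝ => t⁻¹ • (φ (g * γ.1 t) - φ g)) (𝓝[≠] (0 : ℝ)) (𝓝 w)

/-- The directional derivative `(D_γ φ)(g) = lim_{t → 0} (φ(g·γ(t)) - φ(g))/t`
(junk value if the limit does not exist). -/
def dirDeriv (φ : G → Y) (γ : OneParam G) (g : G) : Y :=
  haveI : Nonempty Y := ⟨0⟩
  limUnder (𝓝[≠] (0 : ℝ)) (fun t : ℝ => t⁻¹ • (φ (g * γ.1 t) - φ g))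

/-- The right directional derivative `(D^R_γ φ)(g) = lim_{t → 0} (φ(γ(-t)·g) - φ(g))/t`. -/
def rightDirDeriv (φ : G → Y) (γ : OneParam G) (g : G) : Y :=
  haveI : Nonempty Y := ⟨0⟩
  limUnder (𝓝[≠] (0 : ℝ)) (fun t : ℝ => t⁻¹ • (φ (γ.1 (-t) * g) - φ g))

/-- Iterated directional derivatives: `iteratedD φ k γ g = (D_{γ k}(⋯(D_{γ 1} φ)⋯))(g)`,
with the innermost derivative taken along `γ 0`. -/
def iteratedD (φ : G → Y) : (k : ℕ) → (Fin k → OneParam G) → G → Y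
  | 0, _ => φ
  | (k + 1), γ => dirDeriv (iteratedD φ k (fun i => γ i.castSucc)) (γ (Fin.last k))

/-- `φ ∈ C^∞(G, Y)`: `φ` is continuous and all of its iterated directional derivatives
exist everywhere and are jointly continuous. -/
def IsCSmooth (φ : G → Y) : Prop :=
  Continuous φ ∧ ∀ k : ℕ,
    (∀ (γ : Fin (k + 1) → OneParam G) (g : G),
      HasDirDerivAt (iteratedD φ k (fun i => γ i.castSucc)) (γ (Fin.last k)) g
        (iteratedD φ (k + 1) γ g)) ∧
    Continuous (fun p : (Fin (k + 1) → OneParam G) × G => iteratedD φ (k + 1) p.1 p.2)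

theorem IsCSmooth.continuous_iteratedD {φ : G → Y} (hφ : IsCSmooth φ) (k : ℕ) :
    Continuous (fun p : (Fin k → OneParam G) × G => iteratedD φ k p.1 p.2) := by
  cases k with
  | zero => exact hφ.1.comp continuous_snd
  | succ k => exact (hφ.2 k).2

end DirDeriv

/-- A continuous unitary representation of a topological group `G` on a complex
Hilbert space `H`. -/
structure UnitaryRep (G : Type*) (H : Type*) [TopologicalSpace G] [Group G]
    [NormedAddCommGroup H] [InnerProductSpace ℂ H] where
  toFun : G → H →L[ℂ] H
  map_one' : toFun 1 = 1
  map_mul' : ∀ x y : G, toFun (x * y) = (toFun x).comp (toFun y)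
  inner_map' : ∀ (x : G) (v w : H), (inner ℂ (toFun x v) (toFun x w) : ℂ) = inner ℂ v w
  surjective' : ∀ x : G, Function.Surjective (toFun x)
  continuous' : Continuous fun p : G × H => toFun p.1 p.2

namespace UnitaryRep

variable {G : Type*} [TopologicalSpace G] [Group G]
variable {H : Type*} [NormedAddCommGroup H] [InnerProductSpace ℂ H]

/-- The space of smooth vectors `H_∞` of a representation. -/
def smoothVec (π : UnitaryRep G H) : Set H :=
  {v : H | IsCSmooth fun g : G => π.toFun g v}

/-- `dπ(γ)v = lim_{t → 0} (π(γ(t))v - v)/t`. -/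
def dpi (π : UnitaryRep G H) (γ : OneParam G) (v : H) : H :=
  dirDeriv (fun g : G => π.toFun g v) γ 1

/-- The moment map `Ψ_π(v)(γ) = (1/i)⟨dπ(γ)v, v⟩/⟨v, v⟩`, viewed as an element of
`ℝ^{𝔏(G)}`. -/
def momentMap (π : UnitaryRep G H) (v : H) : OneParam G → ℝ :=
  fun γ => ((inner ℂ v (π.dpi γ v) : ℂ) / (inner ℂ v v : ℂ) / Complex.I).re

/-- The image `I⁰_π = Ψ_π(H_∞ \ {0})` of the moment map. -/
def momentSet0 (π : UnitaryRep G H) : Set (OneParam G → ℝ) :=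
  π.momentMap '' (π.smoothVec \ {0})

/-- The closed moment set `I_π`, the closure of `I⁰_π` in `ℝ^{𝔏(G)}` with the
topology of pointwise convergence. -/
def momentSet (π : UnitaryRep G H) : Set (OneParam G → ℝ) :=
  closure π.momentSet0

end UnitaryRep

end
noncomputable section

/-- The space `C^∞(G, Y)` of smooth functions, topologized below by uniform convergence
of all iterated directional derivatives on compact sets (this coincides with the locally
convex topology given by the seminorms `p_{K₁,K₂}`). -/
def SmoothFns (G : Type*) [TopologicalSpace G] [Group G]
    (Y : Type*) [TopologicalSpace Y] [AddCommGroup Y] [Module ℝ Y] : Type _ :=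
  {φ : G → Y // IsCSmooth φ}

variable {G : Type*} [TopologicalSpace G] [Group G]
variable {Y : Type*} [TopologicalSpace Y] [AddCommGroup Y] [Module ℝ Y]

/-- The `k`-th iterated derivative of a smooth function, as a continuous map. -/
def SmoothFns.iteratedDCM (f : SmoothFns G Y) (k : ℕ) :
    C((Fin k → OneParam G) × G, Y) :=
  ⟨fun p => iteratedD f.1 k p.1 p.2, f.2.continuous_iteratedD k⟩

/-- The topology of `C^∞(G, Y)`: the coarsest topology making all the maps
`f ↦ D^k f ∈ C(𝔏(G)^k × G, Y)` continuous, where the spaces of continuous maps carry the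
compact-open topology (the topology of uniform convergence on compact sets). -/
instance : TopologicalSpace (SmoothFns G Y) :=
  ⨅ k : ℕ, TopologicalSpace.induced (fun f : SmoothFns G Y => f.iteratedDCM k)
    inferInstance

namespace UnitaryRep

variable {H : Type*} [NormedAddCommGroup H] [InnerProductSpace ℂ H]

/-- The space of smooth vectors `H_∞`, as a type. -/
def SmoothVecs (π : UnitaryRep G H) : Type _ := {v : H // v ∈ π.smoothVec}

/-- The canonical injection `A : H_∞ → C^∞(G, H)`, `v ↦ π(·)v`. -/
def smoothVecEmbed (π : UnitaryRep G H) (v : π.SmoothVecs) : SmoothFns G H :=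
  ⟨fun g : G => π.toFun g v.1, v.2⟩

/-- The topology of the space of smooth vectors: the topology induced from `C^∞(G, H)`
via `A : v ↦ π(·)v`. -/
instance (π : UnitaryRep G H) : TopologicalSpace π.SmoothVecs :=
  TopologicalSpace.induced π.smoothVecEmbed inferInstance

end UnitaryRep

end

/-!
For a smooth vector `u` and `f` continuous with compact support,
`π(g) π(f) u = ∫ f(x) π(g x) u dx`. Since `g γ(t) x = (g x) (x⁻¹ γ(t) x)`, differentiating under
the integral sign gives
`D_{γ_k} ⋯ D_{γ_1} (π(·) π(f) u)(g) = ∫ f(x) (D_{x⁻¹ γ_k x} ⋯ D_{x⁻¹ γ_1 x} π(·) u)(g x) dx`,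
so `π(f) u` is smooth. The integrand is jointly continuous in `x` and in `(γ, g)`, and at `x = 1`
it is the corresponding derivative of `π(·) u`; hence, as `W` shrinks, `f_W ≥ 0` with `∫ f_W = 1`
acts as an approximate identity and the derivatives of `π(f_W) u` converge to those of `u`
uniformly on compact sets, i.e. `π(f_W) u → u` in `H_∞`.
-/

open Function

namespace OneParam

variable {G : Type*} [TopologicalSpace G] [Group G]

lemma apply_zero (γ : OneParam G) : γ.1 0 = 1 :=
  mul_left_cancel (a := γ.1 0) (by rw [mul_one, ← γ.2, add_zero])

variable [IsTopologicalGroup G]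

def conj (x : G) (γ : OneParam G) : OneParam G :=
  ⟨⟨fun t => x⁻¹ * γ.1 t * x, by fun_prop⟩, fun t s => by
    simp only [ContinuousMap.coe_mk, γ.2 t s]
    group⟩

@[simp]
lemma conj_one (γ : OneParam G) : conj 1 γ = γ :=
  Subtype.ext (ContinuousMap.ext fun t => by simp [conj])

lemma mul_mul_conj (g x : G) (γ : OneParam G) (t : ℝ) :
    g * x * (conj x γ).1 t = g * γ.1 t * x := by
  simp only [conj, ContinuousMap.coe_mk]
  group

lemma continuous_conj : Continuous fun p : G × OneParam G => conj p.1 p.2 := by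
  refine continuous_induced_rng.2 (ContinuousMap.continuous_of_continuous_uncurry _ ?_)
  have hγ : Continuous fun q : (G × OneParam G) × ℝ => q.1.2.1 q.2 :=
    continuous_eval.comp ((continuous_subtype_val.comp (continuous_snd.comp continuous_fst)).prodMk
      continuous_snd)
  exact ((continuous_fst.comp continuous_fst).inv.mul hγ).mul (continuous_fst.comp continuous_fst)

end OneParam

section DirDeriv

variable {G : Type*} [TopologicalSpace G] [Group G]

lemma HasDirDerivAt.dirDeriv_eq {Y : Type*} [TopologicalSpace Y] [T2Space Y] [AddCommGroup Y]
    [Module ℝ Y] {φ : G → Y} {γ : OneParam G} {g : G} {w : Y} (h : HasDirDerivAt φ γ g w) :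
    dirDeriv φ γ g = w :=
  h.limUnder_eq

variable {E : Type*} [NormedAddCommGroup E] [NormedSpace ℝ E]

lemma hasDirDerivAt_iff_hasDerivAt {φ : G → E} {γ : OneParam G} {g : G} {w : E} :
    HasDirDerivAt φ γ g w ↔ HasDerivAt (fun t => φ (g * γ.1 t)) w 0 := by
  rw [hasDerivAt_iff_tendsto_slope, HasDirDerivAt]
  refine tendsto_congr fun t => ?_
  rw [slope_def_module, sub_zero, γ.apply_zero, mul_one]

lemma HasDirDerivAt.hasDerivAt_comp {φ φ' : G → E} {γ : OneParam G}
    (h : ∀ y, HasDirDerivAt φ γ y (φ' y)) (g : G) (t : ℝ) :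
    HasDerivAt (fun s => φ (g * γ.1 s)) (φ' (g * γ.1 t)) t := by
  have h₀ : HasDerivAt (fun s => φ (g * γ.1 t * γ.1 s)) (φ' (g * γ.1 t)) (t - t) := by
    rw [sub_self]
    exact hasDirDerivAt_iff_hasDerivAt.1 (h (g * γ.1 t))
  refine (h₀.comp_sub_const t t).congr_of_eventuallyEq (Eventually.of_forall fun s => ?_)
  simp only [mul_assoc, ← γ.2, add_sub_cancel]

lemma IsCSmooth.continuous_iteratedD_conj [IsTopologicalGroup G] {φ : G → E} (hφ : IsCSmooth φ)
    (k : ℕ) : Continuous fun q : G × (Fin k → OneParam G) × G =>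
      iteratedD φ k (fun i => OneParam.conj q.1 (q.2.1 i)) q.2.2 := by
  have hconj : Continuous fun q : G × (Fin k → OneParam G) × G =>
      (fun i => OneParam.conj q.1 (q.2.1 i)) :=
    continuous_pi fun i => OneParam.continuous_conj.comp (continuous_fst.prodMk
      ((continuous_apply i).comp (continuous_fst.comp continuous_snd)))
  exact (hφ.continuous_iteratedD k).comp (hconj.prodMk (continuous_snd.comp continuous_snd))

end DirDeriv

lemma tendstoUniformlyOn_of_continuous_uncurry {X Y Z : Type*} [TopologicalSpace X]
    [TopologicalSpace Y] [UniformSpace Z] {h : X → Y → Z} (hh : Continuous (uncurry h))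
    {K : Set Y} (hK : IsCompact K) (x₀ : X) : TendstoUniformlyOn h (h x₀) (𝓝 x₀) K :=
  ContinuousMap.tendsto_iff_forall_isCompact_tendstoUniformlyOn.1
    ((ContinuousMap.curry ⟨_, hh⟩).continuous.tendsto x₀) K hK

section Integral

variable {α : Type*} [TopologicalSpace α] [MeasurableSpace α] [OpensMeasurableSpace α]
  {μ : Measure α} [IsFiniteMeasureOnCompacts μ]
  {E : Type*} [NormedAddCommGroup E] [NormedSpace ℝ E]
  {f : α → ℝ}

lemma HasCompactSupport.integrable_smul (hfc : HasCompactSupport f) (hf : Continuous f)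
    {F : α → E} (hF : Continuous F) : Integrable (fun x => f x • F x) μ :=
  (hf.smul hF).integrable_of_hasCompactSupport hfc.smul_right

lemma norm_integral_smul_le (hf : Continuous f) (hfc : HasCompactSupport f) {F : α → E} {C : ℝ}
    (hF : ∀ x ∈ tsupport f, ‖F x‖ ≤ C) : ‖∫ x, f x • F x ∂μ‖ ≤ (∫ x, |f x| ∂μ) * C := by
  rw [← integral_mul_const]
  refine norm_integral_le_of_norm_le ((hf.abs.integrable_of_hasCompactSupport hfc.abs).mul_const C)
    (ae_of_all _ fun x => ?_)
  by_cases hx : x ∈ tsupport f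
  · rw [norm_smul, Real.norm_eq_abs]
    exact mul_le_mul_of_nonneg_left (hF x hx) (abs_nonneg _)
  · simp [image_eq_zero_of_notMem_tsupport hx]

lemma continuous_integral_smul {X : Type*} [TopologicalSpace X] {h : X → α → E}
    (hh : Continuous (uncurry h)) (hf : Continuous f) (hfc : HasCompactSupport f) :
    Continuous fun p => ∫ x, f x • h p x ∂μ := by
  have hcont : ∀ p, Continuous (h p) := fun p => hh.comp (continuous_const.prodMk continuous_id)
  refine continuous_iff_continuousAt.2 fun p₀ => Metric.tendsto_nhds.2 fun ε hε => ?_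
  set I := ∫ x, |f x| ∂μ
  have hI : 0 ≤ I := integral_nonneg fun x => abs_nonneg _
  have hδ : 0 < ε / (I + 1) := by positivity
  filter_upwards [Metric.tendstoUniformlyOn_iff.1
    (tendstoUniformlyOn_of_continuous_uncurry hh hfc p₀) _ hδ] with p hp
  rw [dist_eq_norm, ← integral_sub (hfc.integrable_smul hf (hcont p))
    (hfc.integrable_smul hf (hcont p₀))]
  simp_rw [← smul_sub]
  calc _ ≤ I * (ε / (I + 1)) :=
        norm_integral_smul_le hf hfc fun x hx => by
          rw [← dist_eq_norm, dist_comm]; exact (hp x hx).le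
    _ < ε := by
        rw [mul_div_assoc', div_lt_iff₀ (by positivity)]
        nlinarith

lemma exists_mem_nhds_norm_integral_smul_sub_lt [CompleteSpace E] {P : Type*}
    [TopologicalSpace P] {h : α → P → E} (hh : Continuous (uncurry h)) {K : Set P}
    (hK : IsCompact K) (a : α) {ε : ℝ} (hε : 0 < ε) :
    ∃ V ∈ 𝓝 a, ∀ f : α → ℝ, Continuous f → HasCompactSupport f → (∀ x, 0 ≤ f x) →
      ∫ x, f x ∂μ = 1 → tsupport f ⊆ V → ∀ p ∈ K, ‖∫ x, f x • h x p ∂μ - h a p‖ < ε := by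
  obtain ⟨V, hV, hVK⟩ := (Metric.tendstoUniformlyOn_iff.1
    (tendstoUniformlyOn_of_continuous_uncurry hh hK a) (ε / 2) (half_pos hε)).exists_mem
  refine ⟨V, hV, fun f hf hfc hf0 hint hfV p hp => ?_⟩
  have hcont : Continuous fun x => h x p := hh.comp (continuous_id.prodMk continuous_const)
  have hconst : h a p = ∫ x, f x • h a p ∂μ := by rw [integral_smul_const, hint, one_smul]
  rw [hconst, ← integral_sub (hfc.integrable_smul hf hcont)
    (hfc.integrable_smul hf continuous_const)]
  simp_rw [← smul_sub]
  calc _ ≤ (∫ x, |f x| ∂μ) * (ε / 2) :=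
        norm_integral_smul_le hf hfc fun x hx => by
          rw [← dist_eq_norm, dist_comm]; exact (hVK x (hfV hx) p hp).le
    _ = ε / 2 := by simp_rw [abs_of_nonneg (hf0 _), hint, one_mul]
    _ < ε := half_lt_self hε

end Integral

section Smoothing

variable {G : Type*} [TopologicalSpace G] [Group G] [IsTopologicalGroup G]
  [MeasurableSpace G] [BorelSpace G] {μ : Measure G} [IsFiniteMeasureOnCompacts μ]
  {E : Type*} [NormedAddCommGroup E] [NormedSpace ℝ E]
  {f : G → ℝ}

lemma hasDirDerivAt_integral_smul {ψ ψ' : G → G → E} {γ : OneParam G}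
    (hψ : ∀ x y, HasDirDerivAt (ψ x) (OneParam.conj x γ) y (ψ' x y))
    (hψc : Continuous (uncurry ψ)) (hψ'c : Continuous (uncurry ψ')) (hf : Continuous f)
    (hfc : HasCompactSupport f) (g : G) :
    HasDirDerivAt (fun g => ∫ x, f x • ψ x (g * x) ∂μ) γ g (∫ x, f x • ψ' x (g * x) ∂μ) := by
  have hderiv : ∀ x t, HasDerivAt (fun t => ψ x (g * γ.1 t * x)) (ψ' x (g * γ.1 t * x)) t := by
    intro x t
    simpa only [OneParam.mul_mul_conj] using (HasDirDerivAt.hasDerivAt_comp (hψ x) (g * x) t)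
  have hγ : Continuous fun z : G × ℝ => g * γ.1 z.2 * z.1 :=
    (continuous_const.mul ((map_continuous γ.1).comp continuous_snd)).mul continuous_fst
  have hΨ : Continuous fun z : G × ℝ => ψ z.1 (g * γ.1 z.2 * z.1) :=
    hψc.comp (continuous_fst.prodMk hγ)
  have hΨ' : Continuous fun z : G × ℝ => ψ' z.1 (g * γ.1 z.2 * z.1) :=
    hψ'c.comp (continuous_fst.prodMk hγ)
  obtain ⟨M, hM⟩ := (hfc.prod (isCompact_closedBall (0 : ℝ) 1)).exists_bound_of_continuousOn
    hΨ'.continuousOn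
  have key := hasDerivAt_integral_of_dominated_loc_of_deriv_le (μ := μ)
    (F := fun t x => f x • ψ x (g * γ.1 t * x)) (F' := fun t x => f x • ψ' x (g * γ.1 t * x))
    (bound := fun x => |f x| * M) (Metric.closedBall_mem_nhds 0 one_pos)
    (Eventually.of_forall fun t => (hfc.integrable_smul hf
      (hΨ.comp (continuous_id.prodMk continuous_const))).aestronglyMeasurable)
    (hfc.integrable_smul hf (hΨ.comp (continuous_id.prodMk continuous_const)))
    (hfc.integrable_smul hf (hΨ'.comp (continuous_id.prodMk continuous_const))).aestronglyMeasurable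
    (ae_of_all _ fun x t ht => ?bound)
    ((hf.abs.integrable_of_hasCompactSupport hfc.abs).mul_const M)
    (ae_of_all _ fun x t _ => (hderiv x t).const_smul (f x))
  case bound =>
    by_cases hx : x ∈ tsupport f
    · rw [norm_smul, Real.norm_eq_abs]
      exact mul_le_mul_of_nonneg_left (hM (x, t) ⟨hx, ht⟩) (abs_nonneg _)
    · simp [image_eq_zero_of_notMem_tsupport hx]
  rw [hasDirDerivAt_iff_hasDerivAt]
  simpa only [γ.apply_zero, mul_one] using key.2

variable {φ : G → E}

lemma IsCSmooth.hasDirDerivAt_integral_smul_iteratedD (hφ : IsCSmooth φ) (hf : Continuous f)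
    (hfc : HasCompactSupport f) (k : ℕ) (γ : Fin (k + 1) → OneParam G) (g : G) :
    HasDirDerivAt
      (fun g => ∫ x, f x • iteratedD φ k (fun i => OneParam.conj x (γ i.castSucc)) (g * x) ∂μ)
      (γ (Fin.last k)) g
      (∫ x, f x • iteratedD φ (k + 1) (fun i => OneParam.conj x (γ i)) (g * x) ∂μ) := by
  have hslice : ∀ m (δ : Fin m → OneParam G), Continuous (uncurry fun x y =>
      iteratedD φ m (fun i => OneParam.conj x (δ i)) y) := fun m δ =>
    (hφ.continuous_iteratedD_conj m).comp
      (continuous_fst.prodMk (continuous_const.prodMk continuous_snd))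
  exact hasDirDerivAt_integral_smul (fun x => (hφ.2 k).1 fun i => OneParam.conj x (γ i))
    (hslice k _) (hslice (k + 1) γ) hf hfc g

lemma IsCSmooth.iteratedD_integral_smul (hφ : IsCSmooth φ) (hf : Continuous f)
    (hfc : HasCompactSupport f) (k : ℕ) (γ : Fin k → OneParam G) (g : G) :
    iteratedD (fun g => ∫ x, f x • φ (g * x) ∂μ) k γ g
      = ∫ x, f x • iteratedD φ k (fun i => OneParam.conj x (γ i)) (g * x) ∂μ := by
  induction k generalizing g with
  | zero => rfl
  | succ k ih =>
    rw [iteratedD, funext (ih _)]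
    exact (hφ.hasDirDerivAt_integral_smul_iteratedD hf hfc k γ g).dirDeriv_eq

lemma IsCSmooth.continuous_integral_smul_iteratedD (hφ : IsCSmooth φ) (hf : Continuous f)
    (hfc : HasCompactSupport f) (k : ℕ) :
    Continuous fun p : (Fin k → OneParam G) × G =>
      ∫ x, f x • iteratedD φ k (fun i => OneParam.conj x (p.1 i)) (p.2 * x) ∂μ :=
  continuous_integral_smul ((hφ.continuous_iteratedD_conj k).comp <| continuous_snd.prodMk
    ((continuous_fst.comp continuous_fst).prodMk
      ((continuous_snd.comp continuous_fst).mul continuous_snd))) hf hfc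

lemma IsCSmooth.integral_smul (hφ : IsCSmooth φ) (hf : Continuous f)
    (hfc : HasCompactSupport f) : IsCSmooth fun g => ∫ x, f x • φ (g * x) ∂μ := by
  refine ⟨continuous_integral_smul (hφ.1.comp (continuous_fst.mul continuous_snd)) hf hfc,
    fun k => ⟨fun γ g => ?_, ?_⟩⟩
  · rw [funext (hφ.iteratedD_integral_smul hf hfc k _), hφ.iteratedD_integral_smul hf hfc]
    exact hφ.hasDirDerivAt_integral_smul_iteratedD hf hfc k γ g
  · simp_rw [hφ.iteratedD_integral_smul hf hfc]
    exact hφ.continuous_integral_smul_iteratedD hf hfc (k + 1)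

end Smoothing

lemma SmoothFns.tendsto_nhds_iff {G Y ι : Type*} [TopologicalSpace G] [Group G]
    [TopologicalSpace Y] [AddCommGroup Y] [Module ℝ Y] {l : Filter ι} {F : ι → SmoothFns G Y}
    {φ : SmoothFns G Y} :
    Tendsto F l (𝓝 φ) ↔ ∀ k, Tendsto (fun i => (F i).iteratedDCM k) l (𝓝 (φ.iteratedDCM k)) := by
  simp only [nhds_iInf, nhds_induced, tendsto_iInf, tendsto_comap_iff]
  rfl

namespace UnitaryRep

variable {G : Type*} [TopologicalSpace G] [Group G]
  {H : Type*} [NormedAddCommGroup H] [InnerProductSpace ℂ H] (π : UnitaryRep G H)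

lemma continuous_orbit (v : H) : Continuous fun g => π.toFun g v :=
  π.continuous'.comp (continuous_id.prodMk continuous_const)

variable [MeasurableSpace G] [BorelSpace G] {μ : Measure G} [IsFiniteMeasureOnCompacts μ]
  [CompleteSpace H] {f : G → ℝ}

lemma apply_integral_smul (hf : Continuous f) (hfc : HasCompactSupport f) (v : H) (g : G) :
    π.toFun g (∫ x, f x • π.toFun x v ∂μ) = ∫ x, f x • π.toFun (g * x) v ∂μ := by
  rw [← (π.toFun g).integral_comp_comm (hfc.integrable_smul hf (π.continuous_orbit v))]
  simp only [ContinuousLinearMap.map_smul_of_tower, π.map_mul', ContinuousLinearMap.comp_apply]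

variable [IsTopologicalGroup G]

lemma integral_smul_mem_smoothVec {u : H} (hu : u ∈ π.smoothVec) (hf : Continuous f)
    (hfc : HasCompactSupport f) : ∫ x, f x • π.toFun x u ∂μ ∈ π.smoothVec := by
  change IsCSmooth fun g => π.toFun g (∫ x, f x • π.toFun x u ∂μ)
  simp_rw [π.apply_integral_smul hf hfc]
  exact IsCSmooth.integral_smul hu hf hfc

lemma tendsto_of_forall_eq_integral_smul {ι : Type*} {l : Filter ι} (u : π.SmoothVecs)
    {m : ι → π.SmoothVecs} (f : ι → G → ℝ)
    (hm : ∀ i, (m i).1 = ∫ x, f i x • π.toFun x u.1 ∂μ)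
    (hf : ∀ i, Continuous (f i)) (hfc : ∀ i, HasCompactSupport (f i)) (hf0 : ∀ i x, 0 ≤ f i x)
    (hint : ∀ i, ∫ x, f i x ∂μ = 1) (hsupp : ∀ V ∈ 𝓝 (1 : G), ∀ᶠ i in l, tsupport (f i) ⊆ V) :
    Tendsto m l (𝓝 u) := by
  have hu : IsCSmooth fun g => π.toFun g u.1 := u.2
  rw [(⟨rfl⟩ : IsInducing π.smoothVecEmbed).tendsto_nhds_iff, SmoothFns.tendsto_nhds_iff]
  refine fun k => ContinuousMap.tendsto_iff_forall_isCompact_tendstoUniformlyOn.2 fun K hK =>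
    Metric.tendstoUniformlyOn_iff.2 fun ε hε => ?_
  have hcont : Continuous (uncurry fun x (p : (Fin k → OneParam G) × G) =>
      iteratedD (fun g => π.toFun g u.1) k (fun i => OneParam.conj x (p.1 i)) (p.2 * x)) :=
    (hu.continuous_iteratedD_conj k).comp <| continuous_fst.prodMk
      ((continuous_fst.comp continuous_snd).prodMk
        ((continuous_snd.comp continuous_snd).mul continuous_fst))
  obtain ⟨V, hV, hVε⟩ := exists_mem_nhds_norm_integral_smul_sub_lt (μ := μ) hcont hK 1 hε
  filter_upwards [hsupp V hV] with i hi p hp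
  change dist (iteratedD (fun g => π.toFun g u.1) k p.1 p.2)
    (iteratedD (fun g => π.toFun g (m i).1) k p.1 p.2) < ε
  simp_rw [hm, π.apply_integral_smul (hf i) (hfc i), hu.iteratedD_integral_smul (hf i) (hfc i),
    dist_comm _ (∫ _, _ ∂μ), dist_eq_norm]
  simpa using hVε (f i) (hf i) (hfc i) (hf0 i) (hint i) hi p hp

end UnitaryRep

theorem dense_range_smooth_delta_family_general
    (G : Type*) [TopologicalSpace G] [Group G] [IsTopologicalGroup G]
    [LocallyCompactSpace G] [MeasurableSpace G] [BorelSpace G]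
    (μ : MeasureTheory.Measure G) [μ.IsHaarMeasure]
    (H : Type*) [NormedAddCommGroup H] [InnerProductSpace ℂ H] [CompleteSpace H]
    (π : UnitaryRep G H)
    (𝒲 : Set (Set G))
    (h𝒲_basis : ∀ U ∈ 𝓝 (1 : G), ∃ W ∈ 𝒲, W ⊆ U)
    (f : Set G → G → ℝ)
    (hf_smooth : ∀ W ∈ 𝒲, IsCSmooth (f W))
    (hf_nonneg : ∀ W ∈ 𝒲, ∀ x : G, 0 ≤ f W x)
    (hf_supp : ∀ W ∈ 𝒲, tsupport (f W) ⊆ W)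
    (hf_int : ∀ W ∈ 𝒲, ∫ x, f W x ∂μ = 1) :
    Dense {u : π.SmoothVecs | ∃ W ∈ 𝒲, ∃ v : H,
      (u.1 : H) = ∫ x, f W x • π.toFun x v ∂μ} := by
  obtain ⟨V₀, hV₀, hV₀1⟩ := exists_compact_mem_nhds (1 : G)
  let ι := {W : Set G // W ∈ 𝒲 ∧ W ⊆ V₀}
  let l : Filter ι := comap Subtype.val (𝓝 (1 : G)).smallSets
  have hl : l.NeBot := comap_neBot fun t ht => by
    obtain ⟨U, hU, hUt⟩ := (hasBasis_smallSets _).mem_iff.1 ht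
    obtain ⟨W, hW, hWU⟩ := h𝒲_basis _ (inter_mem hU hV₀1)
    exact ⟨⟨W, hW, hWU.trans Set.inter_subset_right⟩, hUt (hWU.trans Set.inter_subset_left)⟩
  have hsupp : ∀ V ∈ 𝓝 (1 : G), ∀ᶠ W in l, tsupport (f W.1) ⊆ V := fun V hV =>
    (tendsto_comap.eventually (eventually_smallSets_subset.2 hV)).mono fun W hW =>
      (hf_supp _ W.2.1).trans hW
  have hfc : ∀ W : ι, HasCompactSupport (f W.1) := fun W =>
    hV₀.of_isClosed_subset (isClosed_tsupport _) ((hf_supp _ W.2.1).trans W.2.2)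
  intro u
  exact mem_closure_of_tendsto
    (π.tendsto_of_forall_eq_integral_smul u
      (m := fun W => ⟨_, π.integral_smul_mem_smoothVec u.2 (hf_smooth _ W.2.1).1 (hfc W)⟩)
      (fun W => f W.1) (fun W => rfl) (fun W => (hf_smooth _ W.2.1).1) hfc
      (fun W => hf_nonneg _ W.2.1) (fun W => hf_int _ W.2.1) hsupp)
    (Eventually.of_forall fun W => ⟨W.1, W.2.1, u.1, rfl⟩)

/-- For a locally compact group `G` with left Haar measure `μ`, a continuous unitary
representation `π`, and any smooth δ-family `{f_W}_{W ∈ 𝒲}` on `G`, the set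
`{π(f_W)v : W ∈ 𝒲, v ∈ H}` is dense in the space of smooth vectors `H_∞`. -/
theorem dense_range_smooth_delta_family
    (G : Type*) [TopologicalSpace G] [Group G] [IsTopologicalGroup G]
    [LocallyCompactSpace G] [MeasurableSpace G] [BorelSpace G]
    (μ : MeasureTheory.Measure G) [μ.IsHaarMeasure]
    (H : Type*) [NormedAddCommGroup H] [InnerProductSpace ℂ H] [CompleteSpace H]
    (π : UnitaryRep G H)
    (𝒲 : Set (Set G))
    (h𝒲_nhds : ∀ W ∈ 𝒲, W ∈ 𝓝 (1 : G))
    (h𝒲_basis : ∀ U ∈ 𝓝 (1 : G), ∃ W ∈ 𝒲, W ⊆ U)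
    (f : Set G → G → ℝ)
    (hf_smooth : ∀ W ∈ 𝒲, IsCSmooth (f W))
    (hf_nonneg : ∀ W ∈ 𝒲, ∀ x : G, 0 ≤ f W x)
    (hf_supp : ∀ W ∈ 𝒲, tsupport (f W) ⊆ W)
    (hf_int : ∀ W ∈ 𝒲, ∫ x, f W x ∂μ = 1) :
    Dense {u : π.SmoothVecs | ∃ W ∈ 𝒲, ∃ v : H,
      (u.1 : H) = ∫ x, f W x • π.toFun x v ∂μ} :=
  dense_range_smooth_delta_family_general G μ H π 𝒲 h𝒲_basis f hf_smooth hf_nonneg hf_supp hf_int
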